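/- arXiv:1902.09245 — 2 statements merged into one kernel-verified Lean document; each statement's English description precedes it below -/
import Mathlib

section
/- For every d, h ∈ ℝ³, the following exact cancellation holds: (1/2)·D²ψ(d)(d × h, d × h) + (1/2)·Dψ(d)((d × h) × h) = 0, where Dψ and D²ψ denote the first and second Fréchet derivatives of ψ. -/
open RealInnerProductSpace

/-- Cross product on `ℝ³ = EuclideanSpace ℝ (Fin 3)`. -/
noncomputable def cross3 (a b : EuclideanSpace ℝ (Fin 3)) : EuclideanSpace ℝ (Fin 3) :=
  WithLp.toLp 2 (crossProduct a b)

namespace PsiAux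

abbrev E3 := EuclideanSpace ℝ (Fin 3)

/-- The real inner product, bundled as a real-linear continuous linear map. -/
noncomputable def L : E3 →L[ℝ] E3 →L[ℝ] ℝ :=
  LinearMap.toContinuousLinearMap
    { toFun := fun x => innerSL ℝ x
      map_add' := by intro x y; ext v; simp [inner_add_left]
      map_smul' := by intro c x; ext v; simp [real_inner_smul_left] }

@[simp] lemma L_apply (x v : E3) : L x v = ⟪x, v⟫ := rfl

lemma inner_self_cross (a b : E3) : ⟪a, cross3 a b⟫ = 0 := by
  simp [PiLp.inner_apply, RCLike.inner_apply, Fin.sum_univ_three, cross3, cross_apply]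
  ring

lemma inner_cross_cross (a b : E3) :
    ⟪a, cross3 (cross3 a b) b⟫ = -⟪cross3 a b, cross3 a b⟫ := by
  simp [PiLp.inner_apply, RCLike.inner_apply, Fin.sum_univ_three, cross3, cross_apply,
    EuclideanSpace.norm_sq_eq]
  ring

end PsiAux

open PsiAux in
/-- The exact cancellation `(1/2)·D²ψ(d)(d×h, d×h) + (1/2)·Dψ(d)((d×h)×h) = 0`
for `ψ(d) = (‖d‖² − 1)² · φ(ℓ·(‖d‖² − 1))`. -/
theorem psi_cancellation (ℓ : ℕ) (hℓ : 0 < ℓ) (φ : ℝ → ℝ) (hφ : ContDiff ℝ (⊤ : ℕ∞) φ)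
    (ψ : EuclideanSpace ℝ (Fin 3) → ℝ)
    (hψ : ∀ d, ψ d = (‖d‖ ^ 2 - 1) ^ 2 * φ (ℓ * (‖d‖ ^ 2 - 1)))
    (d h : EuclideanSpace ℝ (Fin 3)) :
    (1 / 2) * fderiv ℝ (fderiv ℝ ψ) d (cross3 d h) (cross3 d h) +
      (1 / 2) * fderiv ℝ ψ d (cross3 (cross3 d h) h) = 0 := by
  classical
  set g : ℝ → ℝ := fun t => (t - 1) ^ 2 * φ (ℓ * (t - 1)) with hg_def
  have hg : ContDiff ℝ (⊤ : ℕ∞) g := by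
    apply ContDiff.mul
    · exact (contDiff_id.sub contDiff_const).pow 2
    · exact hφ.comp (contDiff_const.mul (contDiff_id.sub contDiff_const))
  have hg2 : ContDiff ℝ (↑(⊤ : ℕ∞)) g := hg.of_le (by simp)
  have hg' : ContDiff ℝ (↑(⊤ : ℕ∞)) (deriv g) := (contDiff_infty_iff_deriv.mp hg2).2
  have hψeq : ψ = fun x : E3 => g (‖x‖ ^ 2) := funext fun x => hψ x
  -- first derivative
  set c : E3 → ℝ := fun x => 2 * deriv g (‖x‖ ^ 2) with hc_def
  have hD1 : ∀ x : E3, HasFDerivAt ψ (c x • L x) x := by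
    intro x
    have hN : HasFDerivAt (fun x : E3 => ‖x‖ ^ 2) (2 • (innerSL ℝ x)) x :=
      (hasStrictFDerivAt_norm_sq x).hasFDerivAt
    have hgd : HasDerivAt g (deriv g (‖x‖ ^ 2)) (‖x‖ ^ 2) :=
      ((hg.differentiable (by simp)) _).hasDerivAt
    have := hgd.comp_hasFDerivAt x hN
    rw [hψeq]
    refine this.congr_fderiv ?_
    ext v
    simp [c, mul_comm, mul_assoc, mul_left_comm]
  have hfd1 : fderiv ℝ ψ = fun x : E3 => c x • L x := funext fun x => (hD1 x).fderiv
  -- derivative of c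
  have hcD : HasFDerivAt c
      ((2 * deriv (deriv g) (‖d‖ ^ 2)) • (2 • (innerSL ℝ d) : E3 →L[ℝ] ℝ)) d := by
    have hN : HasFDerivAt (fun x : E3 => ‖x‖ ^ 2) (2 • (innerSL ℝ d)) d :=
      (hasStrictFDerivAt_norm_sq d).hasFDerivAt
    have hgd : HasDerivAt (fun t => 2 * deriv g t) (2 * deriv (deriv g) (‖d‖ ^ 2))
        (‖d‖ ^ 2) := ((hg'.differentiable (by simp)) _).hasDerivAt.const_mul 2
    have := hgd.comp_hasFDerivAt d hN
    exact this
  -- second derivative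
  have hD2 : HasFDerivAt (fun x : E3 => c x • L x)
      (c d • (L : E3 →L[ℝ] E3 →L[ℝ] ℝ) +
        ((2 * deriv (deriv g) (‖d‖ ^ 2)) • (2 • (innerSL ℝ d) : E3 →L[ℝ] ℝ)).smulRight (L d))
      d := hcD.smul L.hasFDerivAt
  have hfd2 : fderiv ℝ (fderiv ℝ ψ) d
      = c d • (L : E3 →L[ℝ] E3 →L[ℝ] ℝ) +
        ((2 * deriv (deriv g) (‖d‖ ^ 2)) • (2 • (innerSL ℝ d) : E3 →L[ℝ] ℝ)).smulRight (L d) := by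
    rw [hfd1]; exact hD2.fderiv
  have hfd1d : fderiv ℝ ψ d = c d • L d := by rw [hfd1]
  set u := cross3 d h with hu
  have hdu : ⟪d, u⟫ = 0 := inner_self_cross d h
  have hduu : ⟪d, cross3 u h⟫ = -⟪u, u⟫ := inner_cross_cross d h
  rw [hfd2, hfd1d]
  simp only [ContinuousLinearMap.add_apply, ContinuousLinearMap.smul_apply,
    ContinuousLinearMap.smulRight_apply, smul_eq_mul, PsiAux.L_apply, real_inner_smul_left,
    ContinuousLinearMap.coe_smul', Pi.smul_apply, innerSL_apply_apply]
  rw [hdu, hduu]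
  ring
end

section
/- Let (X, μ) be a measure space with μ a finite measure, and let d, k : X → ℝ³ be measurable functions that are bounded (there exists M such that ‖d(x)‖ ≤ M and ‖k(x)‖ ≤ M for all x). Then the limit as ℓ → ∞ (ℓ ranging over positive integers) of ∫_X [4·(‖d(x)‖² − 1)·φ(ℓ·(‖d(x)‖² − 1)) + 2·ℓ·(‖d(x)‖² − 1)²·φ′(ℓ·(‖d(x)‖² − 1))]·⟪d(x), k(x)⟫ dμ(x) equals −4·∫_X max(1 − ‖d(x)‖², 0)·⟪d(x), k(x)⟫ dμ(x). -/
open Filter Topology MeasureTheory RealInnerProductSpace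

/-- If `φ : ℝ → ℝ` is `C¹`, `0 ≤ φ ≤ 1`, `φ = 1` on `(-∞, -2]`, `φ = 0` on `[-1, ∞)`,
with `φ′ = 0` outside `[-2, -1]`, `μ` a finite measure on `X`, and `d, k : X → ℝ³`
measurable and bounded, then
`∫ [4(‖d‖²−1)φ(ℓ(‖d‖²−1)) + 2ℓ(‖d‖²−1)²φ′(ℓ(‖d‖²−1))]⟪d,k⟫ dμ
  → −4 ∫ max(1−‖d‖², 0)⟪d,k⟫ dμ` as `ℓ → ∞`. -/
theorem integral_psi_deriv_tendsto (φ : ℝ → ℝ) (hφ : ContDiff ℝ 1 φ)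
    (hφ0 : ∀ s, 0 ≤ φ s) (hφ1 : ∀ s, φ s ≤ 1)
    (hφ_left : ∀ s : ℝ, s ≤ -2 → φ s = 1) (hφ_right : ∀ s : ℝ, -1 ≤ s → φ s = 0)
    (hsupp : ∀ s : ℝ, s ∉ Set.Icc (-2 : ℝ) (-1) → deriv φ s = 0)
    {X : Type*} [MeasurableSpace X] (μ : Measure X) [IsFiniteMeasure μ]
    (d k : X → EuclideanSpace ℝ (Fin 3)) (hd : Measurable d) (hk : Measurable k)
    (M : ℝ) (hMd : ∀ x, ‖d x‖ ≤ M) (hMk : ∀ x, ‖k x‖ ≤ M) :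
    Tendsto
      (fun ℓ : ℕ => ∫ x,
        (4 * (‖d x‖ ^ 2 - 1) * φ (ℓ * (‖d x‖ ^ 2 - 1)) +
          2 * ℓ * (‖d x‖ ^ 2 - 1) ^ 2 * deriv φ (ℓ * (‖d x‖ ^ 2 - 1))) * ⟪d x, k x⟫ ∂μ)
      atTop
      (𝓝 (-4 * ∫ x, max (1 - ‖d x‖ ^ 2) 0 * ⟪d x, k x⟫ ∂μ)) := by
  classical
  set M' := max M 0 with hM'def
  have hM'0 : (0:ℝ) ≤ M' := le_max_right _ _
  have hMd' : ∀ x, ‖d x‖ ≤ M' := fun x => (hMd x).trans (le_max_left _ _)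
  have hMk' : ∀ x, ‖k x‖ ≤ M' := fun x => (hMk x).trans (le_max_left _ _)
  have hφc : Continuous φ := hφ.continuous
  have hφ'c : Continuous (deriv φ) := hφ.continuous_deriv le_rfl
  obtain ⟨C, hC⟩ := (isCompact_Icc (a := (-2:ℝ)) (b := (-1:ℝ))).exists_bound_of_continuousOn
    hφ'c.continuousOn
  set C' := max C 0 with hC'def
  have hC'0 : (0:ℝ) ≤ C' := le_max_right _ _
  have hC' : ∀ s, |deriv φ s| ≤ C' := by
    intro s
    by_cases hs : s ∈ Set.Icc (-2:ℝ) (-1)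
    · exact le_trans (by simpa [Real.norm_eq_abs] using hC s hs) (le_max_left _ _)
    · rw [hsupp s hs]; simpa using hC'0
  have ht_lb : ∀ x, -1 ≤ ‖d x‖ ^ 2 - 1 := fun x => by nlinarith [sq_nonneg ‖d x‖]
  have ht_abs : ∀ x, |‖d x‖ ^ 2 - 1| ≤ M' ^ 2 + 1 := fun x => by
    rw [abs_le]
    constructor
    · nlinarith [sq_nonneg M', sq_nonneg ‖d x‖]
    · nlinarith [hMd' x, norm_nonneg (d x)]
  have hip : ∀ x, |⟪d x, k x⟫| ≤ M' ^ 2 := fun x => by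
    calc |⟪d x, k x⟫| ≤ ‖d x‖ * ‖k x‖ := abs_real_inner_le_norm _ _
    _ ≤ M' * M' := mul_le_mul (hMd' x) (hMk' x) (norm_nonneg _) hM'0
    _ = M' ^ 2 := (sq M').symm
  rw [← integral_const_mul]
  apply tendsto_integral_of_dominated_convergence
    (fun _ => (4 * (M' ^ 2 + 1) * (1 + C')) * M' ^ 2)
  · -- measurability
    intro ℓ
    apply Measurable.aestronglyMeasurable
    have h1 : Measurable fun x => ‖d x‖ ^ 2 - 1 := (hd.norm.pow_const 2).sub_const 1
    have h2 : Measurable fun x => (ℓ:ℝ) * (‖d x‖ ^ 2 - 1) := h1.const_mul _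
    exact (((h1.const_mul 4).mul (hφc.measurable.comp h2)).add
      (((h1.pow_const 2).const_mul (2 * (ℓ:ℝ))).mul (hφ'c.measurable.comp h2))).mul
      (hd.inner hk)
  · -- integrable bound
    exact integrable_const _
  · -- bound
    intro ℓ
    filter_upwards with x
    set t := ‖d x‖ ^ 2 - 1 with htdef
    rw [Real.norm_eq_abs, abs_mul]
    have habs : |4 * t * φ ((ℓ:ℝ) * t) + 2 * (ℓ:ℝ) * t ^ 2 * deriv φ ((ℓ:ℝ) * t)|
        ≤ 4 * (M' ^ 2 + 1) * (1 + C') := by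
      have h1 : |4 * t * φ ((ℓ:ℝ) * t)| ≤ 4 * (M' ^ 2 + 1) := by
        rw [abs_mul, abs_mul]
        calc |(4:ℝ)| * |t| * |φ ((ℓ:ℝ) * t)| ≤ 4 * (M' ^ 2 + 1) * 1 := by
              apply mul_le_mul _ _ (abs_nonneg _) (by positivity)
              · exact mul_le_mul (by norm_num) (ht_abs x) (abs_nonneg _) (by norm_num)
              · rw [abs_of_nonneg (hφ0 _)]; exact hφ1 _
        _ = 4 * (M' ^ 2 + 1) := mul_one _
      have h2 : |2 * (ℓ:ℝ) * t ^ 2 * deriv φ ((ℓ:ℝ) * t)| ≤ 4 * (M' ^ 2 + 1) * C' := by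
        by_cases hmem : (ℓ:ℝ) * t ∈ Set.Icc (-2:ℝ) (-1)
        · obtain ⟨hm1, hm2⟩ := hmem
          have hℓ0 : (0:ℝ) ≤ (ℓ:ℝ) := Nat.cast_nonneg _
          have htneg : t < 0 := by
            rcases lt_or_ge t 0 with h | h
            · exact h
            · exfalso; nlinarith [mul_nonneg hℓ0 h]
          have hlt2 : (ℓ:ℝ) * t ^ 2 ≤ 2 * |t| := by
            rw [abs_of_neg htneg]
            nlinarith [mul_nonneg (by linarith : (0:ℝ) ≤ (ℓ:ℝ) * t + 2)
              (by linarith : (0:ℝ) ≤ -t)]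
          rw [abs_mul]
          calc |2 * (ℓ:ℝ) * t ^ 2| * |deriv φ ((ℓ:ℝ) * t)|
              ≤ (2 * (2 * |t|)) * C' := by
                apply mul_le_mul _ (hC' _) (abs_nonneg _) (by positivity)
                rw [show (2:ℝ) * (ℓ:ℝ) * t ^ 2 = 2 * ((ℓ:ℝ) * t ^ 2) by ring,
                  abs_of_nonneg (by positivity)]
                linarith
          _ ≤ 4 * (M' ^ 2 + 1) * C' := by
                have hta : |t| ≤ M' ^ 2 + 1 := ht_abs x
                nlinarith [abs_nonneg t]
        · rw [hsupp _ hmem, mul_zero, abs_zero]; positivity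
      calc |4 * t * φ ((ℓ:ℝ) * t) + 2 * (ℓ:ℝ) * t ^ 2 * deriv φ ((ℓ:ℝ) * t)|
          ≤ |4 * t * φ ((ℓ:ℝ) * t)| + |2 * (ℓ:ℝ) * t ^ 2 * deriv φ ((ℓ:ℝ) * t)| :=
            abs_add_le _ _
      _ ≤ 4 * (M' ^ 2 + 1) + 4 * (M' ^ 2 + 1) * C' := add_le_add h1 h2
      _ = 4 * (M' ^ 2 + 1) * (1 + C') := by ring
    exact mul_le_mul habs (hip x) (abs_nonneg _) (by positivity)
  · -- pointwise limit
    filter_upwards with x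
    set t := ‖d x‖ ^ 2 - 1 with htdef
    by_cases hx : 0 ≤ t
    · have hzero : ∀ ℓ : ℕ, (4 * t * φ ((ℓ:ℝ) * t) +
          2 * (ℓ:ℝ) * t ^ 2 * deriv φ ((ℓ:ℝ) * t)) * ⟪d x, k x⟫ = 0 := by
        intro ℓ
        have hnn : (0:ℝ) ≤ (ℓ:ℝ) * t := mul_nonneg (Nat.cast_nonneg _) hx
        have h1 : φ ((ℓ:ℝ) * t) = 0 := hφ_right _ (by linarith)
        have h2 : deriv φ ((ℓ:ℝ) * t) = 0 := hsupp _ (fun hmem => by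
          have := hmem.2; linarith)
        rw [h1, h2]; ring
      have htarget : -4 * (max (1 - ‖d x‖ ^ 2) 0 * ⟪d x, k x⟫) = 0 := by
        have hm : max (1 - ‖d x‖ ^ 2) 0 = 0 := max_eq_right (by
          rw [htdef] at hx; linarith)
        rw [hm]; ring
      rw [htarget]
      exact tendsto_const_nhds.congr fun ℓ => (hzero ℓ).symm
    · push_neg at hx
      have hAB : Tendsto (fun ℓ : ℕ => (ℓ:ℝ) * t) atTop atBot :=
        tendsto_natCast_atTop_atTop.atTop_mul_const_of_neg hx
      have hev : ∀ᶠ ℓ : ℕ in atTop, (ℓ:ℝ) * t < -2 :=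
        hAB.eventually (eventually_lt_atBot (-2))
      have htarget : -4 * (max (1 - ‖d x‖ ^ 2) 0 * ⟪d x, k x⟫)
          = 4 * t * ⟪d x, k x⟫ := by
        have hx' : ‖d x‖ ^ 2 - 1 < 0 := hx
        have hm : max (1 - ‖d x‖ ^ 2) 0 = 1 - ‖d x‖ ^ 2 := max_eq_left (by linarith)
        rw [hm, htdef]; ring
      rw [htarget]
      apply Tendsto.congr' _ tendsto_const_nhds
      filter_upwards [hev] with ℓ hℓ
      have h1 : φ ((ℓ:ℝ) * t) = 1 := hφ_left _ (le_of_lt hℓ)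
      have h2 : deriv φ ((ℓ:ℝ) * t) = 0 := hsupp _ (fun hmem => by
        have := hmem.1; linarith)
      rw [h1, h2]; ring
end
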